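/- arXiv:2005.12700 — 3 statements merged into one kernel-verified Lean document; each statement's English description precedes it below -/
import Mathlib

section
/- Let e : Fin p → X and f : Fin q → X be associated principal bases of subspaces V and W, let S ⊆ Fin p, let U = span{e i : i ∈ S}, and let P be the orthogonal projection of X onto W. Then P(U) = span{ f i : i ∈ S, i < q, and ⟪e i, f i⟫ ≠ 0 }. In particular, the orthogonal projection onto W of a principal subspace of V is spanned by a subset of the principal basis f of W. -/
/-! The family `f` is an orthonormal basis of `W`, and `e i` is orthogonal to every `f j` with
`j ≠ i`, so the projection of `e i` onto `W` is `⟪f i, e i⟫ • f i`, or `0` when `f` has no index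
`i`. As `⟪e i, f i⟫` is real, `⟪f i, e i⟫ = ⟪e i, f i⟫`. Hence `P(U)` is spanned by the vectors
`⟪e i, f i⟫ • f i` with `i ∈ S`, and discarding those with zero coefficient leaves exactly the
`f i` with `⟪e i, f i⟫ ≠ 0`. -/

variable {𝕜 X : Type*} [RCLike 𝕜] [NormedAddCommGroup X] [InnerProductSpace 𝕜 X]
  [FiniteDimensional 𝕜 X]

/-- Orthonormal families `e` spanning `V` and `f` spanning `W` are *associated principal bases*
of `V` and `W`: `⟪e i, f j⟫ = 0` whenever `i ≠ j`, and each `⟪e i, f i⟫` is a nonnegative real. -/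
def IsPrincipalPair {𝕜 X : Type*} [RCLike 𝕜] [NormedAddCommGroup X] [InnerProductSpace 𝕜 X]
    {p q : ℕ} (V W : Submodule 𝕜 X) (e : Fin p → X) (f : Fin q → X) : Prop :=
  Orthonormal 𝕜 e ∧ Submodule.span 𝕜 (Set.range e) = V ∧
  Orthonormal 𝕜 f ∧ Submodule.span 𝕜 (Set.range f) = W ∧
  (∀ (i : Fin p) (j : Fin q), (i : ℕ) ≠ (j : ℕ) → (inner 𝕜 (e i) (f j) : 𝕜) = 0) ∧
  (∀ (i : Fin p) (j : Fin q), (i : ℕ) = (j : ℕ) →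
    ∃ c : ℝ, 0 ≤ c ∧ (inner 𝕜 (e i) (f j) : 𝕜) = (c : 𝕜))

open Submodule

theorem Submodule.span_image_smul_eq {K M ι : Type*} [DivisionRing K] [AddCommGroup M]
    [Module K M] (c : ι → K) (v : ι → M) (S : Set ι) :
    span K ((fun i ↦ c i • v i) '' S) = span K (v '' {i ∈ S | c i ≠ 0}) := by
  apply le_antisymm <;> rw [span_le]
  · rintro _ ⟨i, hiS, rfl⟩
    by_cases hc : c i = 0
    · simp [hc]
    · exact smul_mem _ _ (subset_span ⟨i, ⟨hiS, hc⟩, rfl⟩)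
  · rintro _ ⟨i, ⟨hiS, hc⟩, rfl⟩
    rw [← inv_smul_smul₀ hc (v i)]
    exact smul_mem _ _ (subset_span ⟨i, hiS, rfl⟩)

section

variable {E : Type*} [NormedAddCommGroup E] [InnerProductSpace 𝕜 E]

theorem Orthonormal.starProjection_eq_sum {ι : Type*} [Fintype ι] {W : Submodule 𝕜 E}
    [W.HasOrthogonalProjection] {f : ι → E} (hf : Orthonormal 𝕜 f)
    (hW : span 𝕜 (Set.range f) = W) (x : E) :
    W.starProjection x = ∑ j, inner 𝕜 (f j) x • f j := by
  have hfW : ∀ j, f j ∈ W := fun j ↦ hW ▸ subset_span ⟨j, rfl⟩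
  refine eq_starProjection_of_mem_orthogonal (sum_mem fun j _ ↦ smul_mem _ _ (hfW j)) ?_
  rw [← hW, ← span_singleton_le_iff_mem]
  refine (isOrtho_span.mpr ?_).symm
  rintro _ ⟨j, rfl⟩ _ rfl
  rw [inner_sub_right, hf.inner_right_fintype, sub_self]

def extendByZero {p q : ℕ} (f : Fin q → E) (i : Fin p) : E :=
  if h : (i : ℕ) < q then f ⟨i, h⟩ else 0

namespace IsPrincipalPair

variable {p q : ℕ} {V W : Submodule 𝕜 E} {e : Fin p → E} {f : Fin q → E}

theorem inner_comm (hef : IsPrincipalPair V W e f) (i : Fin p) (j : Fin q) :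
    inner 𝕜 (f j) (e i) = inner 𝕜 (e i) (f j) := by
  obtain ⟨-, -, -, -, hzero, hreal⟩ := hef
  rw [← inner_conj_symm]
  by_cases hij : (i : ℕ) = j
  · obtain ⟨c, -, hc⟩ := hreal i j hij
    rw [hc, RCLike.conj_ofReal]
  · rw [hzero i j hij, map_zero]

theorem starProjection_apply [W.HasOrthogonalProjection] (hef : IsPrincipalPair V W e f)
    (i : Fin p) :
    W.starProjection (e i) = inner 𝕜 (e i) (extendByZero f i) • extendByZero f i := by
  have hcomm := hef.inner_comm
  obtain ⟨-, -, hf, hW, hzero, -⟩ := hef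
  rw [hf.starProjection_eq_sum hW]
  simp_rw [hcomm]
  unfold extendByZero
  split_ifs with h
  · refine Finset.sum_eq_single _ (fun j _ hj ↦ ?_) (by simp)
    rw [hzero i j (fun hij ↦ hj (Fin.ext hij.symm)), zero_smul]
  · rw [smul_zero]
    exact Finset.sum_eq_zero fun j _ ↦ by rw [hzero i j (by omega), zero_smul]

end IsPrincipalPair

theorem setOf_eq_image_extendByZero {p q : ℕ} (e : Fin p → E) (f : Fin q → E)
    (S : Set (Fin p)) :
    {x | ∃ (i : Fin p) (h : (i : ℕ) < q),
      i ∈ S ∧ (inner 𝕜 (e i) (f ⟨(i : ℕ), h⟩) : 𝕜) ≠ 0 ∧ x = f ⟨(i : ℕ), h⟩} =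
    extendByZero f '' {i ∈ S | inner 𝕜 (e i) (extendByZero f i) ≠ 0} := by
  ext x
  constructor
  · rintro ⟨i, h, hiS, hne, rfl⟩
    exact ⟨i, ⟨hiS, by simpa [extendByZero, h]⟩, by simp [extendByZero, h]⟩
  · rintro ⟨i, ⟨hiS, hne⟩, rfl⟩
    by_cases h : (i : ℕ) < q
    · simp only [extendByZero, dif_pos h] at hne ⊢
      exact ⟨i, h, hiS, hne, rfl⟩
    · simp [extendByZero, h] at hne

end

/-- For associated principal bases `e, f` of `V, W`, a subset `S ⊆ Fin p`,
`U = span {e i : i ∈ S}`, and `P` the orthogonal projection onto `W`: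
`P(U) = span {f i : i ∈ S, i < q, ⟪e i, f i⟫ ≠ 0}`. -/
theorem image_of_principal_subspace {p q : ℕ} (V W : Submodule 𝕜 X)
    (e : Fin p → X) (f : Fin q → X) (hef : IsPrincipalPair V W e f)
    (S : Set (Fin p)) (U : Submodule 𝕜 X) (hU : U = Submodule.span 𝕜 (e '' S)) :
    Submodule.map (W.subtype ∘ₗ (W.orthogonalProjection).toLinearMap) U =
      Submodule.span 𝕜
        {x | ∃ (i : Fin p) (h : (i : ℕ) < q),
          i ∈ S ∧ (inner 𝕜 (e i) (f ⟨(i : ℕ), h⟩) : 𝕜) ≠ 0 ∧ x = f ⟨(i : ℕ), h⟩} := by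
  rw [hU, map_span, ← Set.image_comp, setOf_eq_image_extendByZero, ← span_image_smul_eq]
  congr 2
  funext i
  exact hef.starProjection_apply i
end

section
/- Let V and W be nonzero subspaces of X, let U ⊆ V be a subspace, and let P be the orthogonal projection of X onto W. Then U is principal with respect to W — i.e., there exist associated principal bases e of V and f of W and an index set S with U = span{e i : i ∈ S} — if and only if P(U) ⊥ P(U⊥ ∩ V), where U⊥ ∩ V is the orthogonal complement of U within V. -/
/-! If `(e, f)` are associated principal bases, `P (e i)` is a multiple of `f i`, so the
projections of distinct `e i` are orthogonal; as `U = span {e i | i ∈ S}` forces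
`Uᗮ ⊓ V = span {e i | i ∉ S}`, this gives `P(U) ⟂ P(Uᗮ ⊓ V)`.

Conversely, diagonalizing the Gram operator `A† A` of `A = P|_U` gives an orthonormal basis of
`U` with pairwise orthogonal projections, and likewise for `U' = Uᗮ ⊓ V`; the hypothesis makes the
projections of the two bases orthogonal to each other as well. Listing first the vectors with
nonzero projection (there are at most `dim W` of them), their normalized projections extend to an
orthonormal basis `f` of `W`, and `(e, f)` are associated principal bases of `V = U ⊔ U'`. -/

variable {𝕜 X : Type*} [RCLike 𝕜] [NormedAddCommGroup X] [InnerProductSpace 𝕜 X]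
  [FiniteDimensional 𝕜 X]

open Submodule Finset
open scoped InnerProductSpace

section General

variable {E F : Type*} [NormedAddCommGroup E] [InnerProductSpace 𝕜 E]
  [NormedAddCommGroup F] [InnerProductSpace 𝕜 F]

theorem pairwise_inner_eq_zero_of_inl_inr {ι κ : Type*} {u : ι ⊕ κ → E}
    (hl : Pairwise fun i j => ⟪u (.inl i), u (.inl j)⟫_𝕜 = 0)
    (hr : Pairwise fun i j => ⟪u (.inr i), u (.inr j)⟫_𝕜 = 0)
    (hlr : ∀ i j, ⟪u (.inl i), u (.inr j)⟫_𝕜 = 0) :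
    Pairwise fun a b => ⟪u a, u b⟫_𝕜 = 0 := by
  rintro (i | i) (j | j) hij
  · exact hl fun h => hij (congrArg _ h)
  · exact hlr i j
  · exact inner_eq_zero_symm.mp (hlr j i)
  · exact hr fun h => hij (congrArg _ h)

theorem Pairwise.card_filter_ne_zero_le_finrank [FiniteDimensional 𝕜 E] {ι : Type*} [Fintype ι]
    {v : ι → E} (hv : Pairwise fun i j => ⟪v i, v j⟫_𝕜 = 0) [DecidablePred fun i => v i ≠ 0] :
    #{i | v i ≠ 0} ≤ Module.finrank 𝕜 E := by
  rw [← Fintype.card_subtype]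
  refine LinearIndependent.fintype_card_le_finrank (b := fun i : {i // v i ≠ 0} => v i) ?_
  exact linearIndependent_of_ne_zero_of_inner_eq_zero (fun i => i.2)
    fun i j hij => hv (Subtype.coe_ne_coe.mpr hij)

theorem Orthonormal.exists_orthonormalBasis_span {ι : Type*} [Fintype ι] {v : ι → E}
    (hv : Orthonormal 𝕜 v) :
    ∃ b : OrthonormalBasis ι 𝕜 (span 𝕜 (Set.range v)), ∀ i, (b i : E) = v i := by
  let b := Module.Basis.span hv.linearIndependent
  have hb : Orthonormal 𝕜 b :=
    (span 𝕜 (Set.range v)).subtypeₗᵢ.orthonormal_comp_iff.mp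
      (by convert hv; ext i; exact Module.Basis.coe_span_apply _ i)
  exact ⟨b.toOrthonormalBasis hb, fun i => by simp [b]⟩

theorem OrthonormalBasis.orthonormal_coe {ι : Type*} [Fintype ι] {K : Submodule 𝕜 E}
    (b : OrthonormalBasis ι 𝕜 K) : Orthonormal 𝕜 fun i => (b i : E) :=
  b.orthonormal.comp_linearIsometry K.subtypeₗᵢ

theorem OrthonormalBasis.span_range_coe {ι : Type*} [Fintype ι] {K : Submodule 𝕜 E}
    (b : OrthonormalBasis ι 𝕜 K) : span 𝕜 (Set.range fun i => (b i : E)) = K := by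
  change span 𝕜 (Set.range (K.subtype ∘ b)) = K
  rw [Set.range_comp, span_image, ← b.coe_toBasis, b.toBasis.span_eq, map_subtype_top]

theorem Orthonormal.orthogonal_span_image_inf_span_range {ι : Type*} {e : ι → E}
    (he : Orthonormal 𝕜 e) (S : Set ι) :
    (span 𝕜 (e '' S))ᗮ ⊓ span 𝕜 (Set.range e) = span 𝕜 (e '' Sᶜ) := by
  have hperp : span 𝕜 (e '' Sᶜ) ≤ (span 𝕜 (e '' S))ᗮ := by
    refine isOrtho_span.mpr ?_
    rintro _ ⟨i, hi, rfl⟩ _ ⟨j, hj, rfl⟩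
    exact he.2 (by rintro rfl; exact hi hj)
  rw [← Set.image_univ, ← Set.compl_union_self S, Set.image_union, span_union, inf_comm,
    sup_inf_assoc_of_le _ hperp, inf_orthogonal_eq_bot, sup_bot_eq]

theorem LinearMap.exists_orthonormalBasis_pairwise_inner_map_eq_zero [FiniteDimensional 𝕜 E]
    [FiniteDimensional 𝕜 F] (A : E →ₗ[𝕜] F) :
    ∃ b : OrthonormalBasis (Fin (Module.finrank 𝕜 E)) 𝕜 E,
      Pairwise fun i j => ⟪A (b i), A (b j)⟫_𝕜 = 0 := by
  let hA := A.isSymmetric_adjoint_comp_self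
  refine ⟨hA.eigenvectorBasis rfl, fun i j hij => ?_⟩
  show ⟪A _, A _⟫_𝕜 = 0
  rw [← LinearMap.adjoint_inner_right, ← LinearMap.comp_apply, hA.apply_eigenvectorBasis,
    inner_smul_right, (hA.eigenvectorBasis rfl).orthonormal.2 hij, mul_zero]

end General

theorem Fintype.exists_equiv_fin_lt_of_mem {ι : Type*} [Fintype ι] (s : Finset ι) {q : ℕ}
    (hs : #s ≤ q) : ∃ τ : Fin (Fintype.card ι) ≃ ι, ∀ i, τ i ∈ s → (i : ℕ) < q := by
  let ε := (Fintype.equivFin ι).symm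
  let t : Finset ι := (univ.map (Fin.castLEEmb (card_le_univ s))).map ε.toEmbedding
  obtain ⟨σ, hσ⟩ := Equiv.Perm.exists_map_finset_eq t s (by simp [t])
  refine ⟨ε.trans σ, fun i hi => ?_⟩
  rw [← hσ] at hi
  obtain ⟨j, -, rfl⟩ := mem_map.mp ((mem_map' _).mp ((mem_map' σ.toEmbedding).mp hi))
  exact j.2.trans_le hs

section Principal

variable {V W : Submodule 𝕜 X} {p q : ℕ} {e : Fin p → X} {f : Fin q → X}

theorem IsPrincipalPair.inner_orthogonalProjectionOnto_eq_zero (h : IsPrincipalPair V W e f)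
    {i j : Fin p} (hij : i ≠ j) :
    ⟪W.orthogonalProjectionOnto (e i), W.orthogonalProjectionOnto (e j)⟫_𝕜 = 0 := by
  obtain ⟨-, -, hf, rfl, hoff, -⟩ := h
  obtain ⟨b, hb⟩ := hf.exists_orthonormalBasis_span
  rw [← b.sum_inner_mul_inner]
  refine Finset.sum_eq_zero fun m _ => ?_
  simp only [inner_orthogonalProjectionOnto_eq_of_mem_right,
    inner_orthogonalProjectionOnto_eq_of_mem_left, hb]
  by_cases him : (i : ℕ) = m
  · rw [inner_eq_zero_symm.mp (hoff j m fun hjm => hij (Fin.ext (him.trans hjm.symm))), mul_zero]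
  · rw [hoff i m him, zero_mul]

theorem IsPrincipalPair.isOrtho_map_starProjection (h : IsPrincipalPair V W e f)
    (S : Set (Fin p)) :
    (span 𝕜 (e '' S)).map (W.starProjection : X →ₗ[𝕜] X) ⟂
      ((span 𝕜 (e '' S))ᗮ ⊓ V).map (W.starProjection : X →ₗ[𝕜] X) := by
  rw [← h.2.1, h.1.orthogonal_span_image_inf_span_range, map_span, map_span, isOrtho_span]
  rintro _ ⟨_, ⟨i, hi, rfl⟩, rfl⟩ _ ⟨_, ⟨j, hj, rfl⟩, rfl⟩
  exact h.inner_orthogonalProjectionOnto_eq_zero (by rintro rfl; exact hj hi)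

variable (W) in
theorem exists_isPrincipalPair_of_pairwise_inner_eq_zero (he : Orthonormal 𝕜 e)
    (hQe : Pairwise fun i j =>
      ⟪W.orthogonalProjectionOnto (e i), W.orthogonalProjectionOnto (e j)⟫_𝕜 = 0)
    (hlt : ∀ i, W.orthogonalProjectionOnto (e i) ≠ 0 → (i : ℕ) < Module.finrank 𝕜 W) :
    ∃ f : Fin (Module.finrank 𝕜 W) → X, IsPrincipalPair (span 𝕜 (Set.range e)) W e f := by
  set Q := W.orthogonalProjectionOnto
  -- `f j` is the normalized projection of `e j` when that is nonzero, and completes an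
  -- orthonormal basis of `W` otherwise.
  let g : Fin p → W := fun i => (‖Q (e i)‖⁻¹ : 𝕜) • Q (e i)
  let v : Fin (Module.finrank 𝕜 W) → W := fun j => if h : (j : ℕ) < p then g ⟨j, h⟩ else 0
  let s : Set (Fin (Module.finrank 𝕜 W)) := {j | ∃ h : (j : ℕ) < p, Q (e ⟨j, h⟩) ≠ 0}
  have hv : Orthonormal 𝕜 (s.domRestrict v) := by
    refine ⟨fun ⟨j, h, hj⟩ => ?_, fun ⟨j, h, hj⟩ ⟨j', h', hj'⟩ hjj' => ?_⟩
    · simp only [Set.domRestrict, v, dif_pos h, g]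
      exact norm_smul_inv_norm hj
    · simp only [Set.domRestrict, v, dif_pos h, dif_pos h', g, inner_smul_left, inner_smul_right]
      rw [hQe (by simpa [Fin.ext_iff] using hjj'), mul_zero, mul_zero]
  obtain ⟨b, hb⟩ := hv.exists_orthonormalBasis_extension_of_card_eq (by simp)
  have hQb : ∀ i (hi : Q (e i) ≠ 0), Q (e i) = (‖Q (e i)‖ : 𝕜) • b ⟨i, hlt i hi⟩ := by
    intro i hi
    rw [hb _ ⟨i.2, hi⟩]
    simp [v, g, smul_smul, hi]
  have hkey : ∀ i j, ⟪e i, (b j : X)⟫_𝕜 = if (i : ℕ) = j then (‖Q (e i)‖ : 𝕜) else 0 := by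
    intro i j
    rw [← inner_orthogonalProjectionOnto_eq_of_mem_right]
    by_cases hi : Q (e i) = 0
    · simp [Q, hi]
    · conv_lhs => rw [hQb i hi]
      rw [inner_smul_left, RCLike.conj_ofReal, orthonormal_iff_ite.mp b.orthonormal]
      simp [Fin.ext_iff]
  refine ⟨fun j => b j, he, rfl, b.orthonormal_coe, b.span_range_coe,
    fun i j hij => by rw [hkey, if_neg hij],
    fun i j hij => ⟨_, norm_nonneg _, by rw [hkey, if_pos hij]⟩⟩

end Principal

theorem exists_isPrincipalPair_sup_of_isOrtho {U U' : Submodule 𝕜 X} (hUU' : U ⟂ U')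
    (W : Submodule 𝕜 X)
    (h : U.map (W.starProjection : X →ₗ[𝕜] X) ⟂ U'.map (W.starProjection : X →ₗ[𝕜] X)) :
    ∃ (p q : ℕ) (e : Fin p → X) (f : Fin q → X) (S : Set (Fin p)),
      IsPrincipalPair (U ⊔ U') W e f ∧ U = span 𝕜 (e '' S) := by
  classical
  set Q := W.orthogonalProjectionOnto
  obtain ⟨b₁, hb₁⟩ :=
    ((Q : X →ₗ[𝕜] W) ∘ₗ U.subtype).exists_orthonormalBasis_pairwise_inner_map_eq_zero
  obtain ⟨b₂, hb₂⟩ :=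
    ((Q : X →ₗ[𝕜] W) ∘ₗ U'.subtype).exists_orthonormalBasis_pairwise_inner_map_eq_zero
  let v := Sum.elim (fun i => (b₁ i : X)) (fun i => (b₂ i : X))
  have hv : Orthonormal 𝕜 v := by
    refine ⟨?_, pairwise_inner_eq_zero_of_inl_inr b₁.orthonormal_coe.2 b₂.orthonormal_coe.2
      fun i j => hUU'.inner_eq (b₁ i).2 (b₂ j).2⟩
    rintro (i | i)
    exacts [b₁.orthonormal_coe.1 i, b₂.orthonormal_coe.1 i]
  have hQv : Pairwise fun a b => ⟪Q (v a), Q (v b)⟫_𝕜 = 0 :=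
    pairwise_inner_eq_zero_of_inl_inr hb₁ hb₂
      fun i j => h.inner_eq (mem_map_of_mem (b₁ i).2) (mem_map_of_mem (b₂ j).2)
  obtain ⟨τ, hτ⟩ := Fintype.exists_equiv_fin_lt_of_mem _ hQv.card_filter_ne_zero_le_finrank
  obtain ⟨f, hf⟩ := exists_isPrincipalPair_of_pairwise_inner_eq_zero W (hv.comp τ τ.injective)
    (hQv.comp_of_injective τ.injective) fun i hi => hτ i ((mem_filter_univ _).mpr hi)
  refine ⟨_, _, v ∘ τ, f, τ ⁻¹' Set.range Sum.inl, ?_, ?_⟩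
  · rwa [EquivLike.range_comp, Set.Sum.elim_range, span_union, b₁.span_range_coe,
      b₂.span_range_coe] at hf
  · rw [Set.image_comp, τ.image_preimage, ← Set.range_comp, Sum.elim_comp_inl,
      b₁.span_range_coe]

theorem principal_iff_orthogonal_projections_general (V W : Submodule 𝕜 X)
    (U : Submodule 𝕜 X) (hUV : U ≤ V) :
    (∃ (p q : ℕ) (e : Fin p → X) (f : Fin q → X) (S : Set (Fin p)),
        IsPrincipalPair V W e f ∧ U = Submodule.span 𝕜 (e '' S)) ↔
      (∀ x ∈ Submodule.map (W.subtype ∘ₗ (W.orthogonalProjectionOnto).toLinearMap) U,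
        ∀ y ∈ Submodule.map (W.subtype ∘ₗ (W.orthogonalProjectionOnto).toLinearMap) (Uᗮ ⊓ V),
          (inner 𝕜 x y : 𝕜) = 0) := by
  rw [← isOrtho_iff_inner_eq]
  constructor
  · rintro ⟨p, q, e, f, S, hef, rfl⟩
    exact hef.isOrtho_map_starProjection S
  · intro h
    rw [← sup_orthogonal_inf_of_hasOrthogonalProjection hUV]
    exact exists_isPrincipalPair_sup_of_isOrtho
      ((isOrtho_orthogonal_right U).mono_right inf_le_left) W h

/-- For nonzero subspaces `V, W`, a subspace `U ⊆ V`, and `P` the orthogonal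
projection onto `W`: `U` is principal with respect to `W` if and only if
`P(U) ⊥ P(U^⊥ ∩ V)`. -/
theorem principal_iff_orthogonal_projections (V W : Submodule 𝕜 X) (hV : V ≠ ⊥) (hW : W ≠ ⊥)
    (U : Submodule 𝕜 X) (hUV : U ≤ V) :
    (∃ (p q : ℕ) (e : Fin p → X) (f : Fin q → X) (S : Set (Fin p)),
        IsPrincipalPair V W e f ∧ U = Submodule.span 𝕜 (e '' S)) ↔
      (∀ x ∈ Submodule.map (W.subtype ∘ₗ (W.orthogonalProjectionOnto).toLinearMap) U,
        ∀ y ∈ Submodule.map (W.subtype ∘ₗ (W.orthogonalProjectionOnto).toLinearMap) (Uᗮ ⊓ V),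
          (inner 𝕜 x y : 𝕜) = 0) :=
  principal_iff_orthogonal_projections_general V W U hUV
end

section
/- Let V and W be nonzero subspaces of X with P the orthogonal projection onto W, and let e : Fin p → X be an orthonormal basis of V whose projections are pairwise orthogonal, i.e., ⟪P(e i), P(e j)⟫ = 0 for i ≠ j (equivalently, e is a principal basis of V with respect to W). Let u : Fin r → X be an orthonormal family spanning a subspace U ⊆ V. Then det( (⟪P(u i), P(u j)⟫)_{i,j} ) = ∑_{S ⊆ Fin p, |S| = r} |det( (⟪e k, u j⟫)_{k ∈ S, j ∈ Fin r} )|² · ∏_{k ∈ S} ‖P(e k)‖², where rows are indexed by the increasing enumeration of each subset S. Equivalently, cos²Θ_{U,W} = ∑_S cos²Θ_{U,V_S} · cos²Θ_{V_S,W} over the coordinate r-subspaces V_S = span{e k : k ∈ S} of the principal basis. -/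
/-! Write `u j = ∑ k, A k j • e k` with `A k j = ⟪e k, u j⟫`. Since the projections `P (e k)` are
pairwise orthogonal, the Gram matrix of `P ∘ u` is `Aᴴ * diagonal (‖P (e k)‖²) * A`, and the
Cauchy–Binet formula expands its determinant over the `r`-element row sets `S` of `A`, the term of
`S` being `|det A_S|² * ∏_{k ∈ S} ‖P (e k)‖²`. -/

variable {𝕜 X : Type*} [RCLike 𝕜] [NormedAddCommGroup X] [InnerProductSpace 𝕜 X]
  [FiniteDimensional 𝕜 X]

open Finset ComplexConjugate
open scoped Matrix

namespace Matrix

variable {R : Type*} [CommRing R]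

theorem det_mul_eq_sum_prod_mul_det_submatrix {m ι : Type*} [Fintype m] [DecidableEq m]
    [Fintype ι] (A : Matrix m ι R) (B : Matrix ι m R) :
    (A * B).det = ∑ f : m → ι, (∏ i, A i (f i)) * (B.submatrix f id).det := by
  let detRows := (detRowAlternating : (m → R) [⋀^m]→ₗ[R] R).toMultilinearMap
  calc (A * B).det = detRows fun i => ∑ k, A i k • B k := by
        congr 1
        ext i j
        simp [mul_apply]
    _ = ∑ f : m → ι, detRows fun i => A i (f i) • B (f i) := MultilinearMap.map_sum _ _
    _ = _ := Fintype.sum_congr _ _ fun f => detRows.map_smul_univ _ fun i => B (f i)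

variable {ι : Type*} [LinearOrder ι] {r : ℕ}

theorem det_submatrix_mul_det_submatrix_eq_sum_piFinset {S : Finset ι} (hS : S.card = r)
    (A : Matrix (Fin r) ι R) (B : Matrix ι (Fin r) R) :
    (A.submatrix id (S.orderEmbOfFin hS)).det * (B.submatrix (S.orderEmbOfFin hS) id).det =
      ∑ f ∈ Fintype.piFinset fun _ => S, (∏ i, A i (f i)) * (B.submatrix f id).det := by
  have hpi : (Fintype.piFinset fun _ : Fin r => S) =
      univ.image fun (f : Fin r → Fin r) i => S.orderEmbOfFin hS (f i) := by
    simpa [Fintype.piFinset_univ] using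
      Fintype.piFinset_image (fun _ => S.orderEmbOfFin hS) (fun _ : Fin r => univ)
  rw [← det_mul, det_mul_eq_sum_prod_mul_det_submatrix, hpi,
    sum_image fun (f : Fin r → Fin r) _ g _ hfg =>
      funext fun i => (S.orderEmbOfFin hS).injective (congrFun hfg i)]
  rfl

/-- **Cauchy–Binet formula**. -/
theorem det_mul_eq_sum_powersetCard [Fintype ι] (A : Matrix (Fin r) ι R) (B : Matrix ι (Fin r) R) :
    (A * B).det = ∑ S ∈ (powersetCard r (univ : Finset ι)).attach,
      (A.submatrix id (S.1.orderEmbOfFin (mem_powersetCard_univ.mp S.2))).det *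
        (B.submatrix (S.1.orderEmbOfFin (mem_powersetCard_univ.mp S.2)) id).det := by
  classical
  set h : (Fin r → ι) → R := fun f => (∏ i, A i (f i)) * (B.submatrix f id).det
  have h_eq_zero : ∀ f, ¬ f.Injective → h f = 0 := by
    intro f hf
    obtain ⟨i, j, hfij, hij⟩ := Function.not_injective_iff.mp hf
    show (∏ i, A i (f i)) * (B.submatrix f id).det = 0
    rw [det_zero_of_row_eq (M := B.submatrix f id) hij (by ext; simp [hfij]), mul_zero]
  have image_eq : ∀ S ∈ powersetCard r univ, ∀ f : Fin r → ι, f.Injective →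
      (∀ i, f i ∈ S) → univ.image f = S := by
    intro S hS f hf hfS
    refine eq_of_subset_of_card_le (image_subset_iff.2 fun i _ => hfS i) ?_
    rw [card_image_of_injective _ hf, card_univ, Fintype.card_fin, (mem_powersetCard_univ.mp hS)]
  -- An injective `f` with values in an `r`-set `S` has image `S`: grouping the injective `f` by
  -- their image and re-adding the vanishing non-injective terms gives the sums over `piFinset`.
  calc (A * B).det = ∑ f with f.Injective, h f := by
        rw [det_mul_eq_sum_prod_mul_det_submatrix, sum_filter_of_ne]
        exact fun f _ hf => not_not.mp (mt (h_eq_zero f) hf)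
    _ = ∑ S ∈ powersetCard r univ, ∑ f with f.Injective ∧ univ.image f = S, h f := by
        rw [← sum_fiberwise_of_maps_to (g := fun f => univ.image f) (t := powersetCard r univ)]
        · simp [filter_filter]
        · intro f hf
          simp only [mem_filter, mem_univ, true_and] at hf
          simp [card_image_of_injective _ hf]
    _ = ∑ S ∈ powersetCard r univ, ∑ f ∈ Fintype.piFinset fun _ => S, h f := by
        refine sum_congr rfl fun S hS => sum_subset ?_ ?_
        · intro f hf
          simp only [mem_filter, mem_univ, true_and] at hf
          simp [← hf.2]
        · intro f hfS hf
          simp only [Fintype.mem_piFinset] at hfS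
          simp only [mem_filter, mem_univ, true_and, not_and] at hf
          exact h_eq_zero f fun hinj => hf hinj (image_eq S hS f hinj hfS)
    _ = _ := by
        rw [← sum_attach]
        exact sum_congr rfl fun S _ => (det_submatrix_mul_det_submatrix_eq_sum_piFinset _ A B).symm

theorem det_conjTranspose_mul_diagonal_mul [StarRing R] [Fintype ι] (A : Matrix ι (Fin r) R)
    (d : ι → R) :
    (Aᴴ * diagonal d * A).det = ∑ S ∈ (powersetCard r (univ : Finset ι)).attach,
      star (A.submatrix (S.1.orderEmbOfFin (mem_powersetCard_univ.mp S.2)) id).det *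
        (A.submatrix (S.1.orderEmbOfFin (mem_powersetCard_univ.mp S.2)) id).det *
          ∏ k ∈ S.1, d k := by
  rw [det_mul_eq_sum_powersetCard]
  refine sum_congr rfl fun S _ => ?_
  set emb := S.1.orderEmbOfFin (mem_powersetCard_univ.mp S.2)
  have hsub : (Aᴴ * diagonal d).submatrix id emb = (A.submatrix emb id)ᴴ * diagonal (d ∘ emb) := by
    ext i j
    simp [mul_diagonal]
  have hprod : ∏ i, d (emb i) = ∏ k ∈ S.1, d k := by
    rw [← S.1.image_orderEmbOfFin_univ (mem_powersetCard_univ.mp S.2),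
      prod_image emb.injective.injOn]
  rw [hsub, det_mul, det_conjTranspose, det_diagonal, Function.comp_def, hprod]
  ring

end Matrix

section

variable {E F ι : Type*} [NormedAddCommGroup E] [InnerProductSpace 𝕜 E] [NormedAddCommGroup F]
  [InnerProductSpace 𝕜 F] [Fintype ι]

theorem Orthonormal.sum_inner_smul_eq_of_mem_span {e : ι → E} (he : Orthonormal 𝕜 e) {x : E}
    (hx : x ∈ Submodule.span 𝕜 (Set.range e)) : ∑ k, inner 𝕜 (e k) x • e k = x := by
  obtain ⟨c, rfl⟩ := (Submodule.mem_span_range_iff_exists_fun 𝕜).mp hx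
  simp_rw [he.inner_right_fintype]

theorem inner_sum_smul_sum_smul_of_pairwise_inner_eq_zero {v : ι → F}
    (hv : Pairwise fun i j => inner 𝕜 (v i) (v j) = 0) (a b : ι → 𝕜) :
    inner 𝕜 (∑ i, a i • v i) (∑ i, b i • v i) = ∑ i, conj (a i) * (‖v i‖ : 𝕜) ^ 2 * b i := by
  classical
  simp_rw [sum_inner, inner_sum, inner_smul_left, inner_smul_right]
  refine sum_congr rfl fun i _ => ?_
  rw [sum_eq_single i (fun j _ hji => by rw [hv hji.symm, mul_zero, mul_zero]) (by simp),
    inner_self_eq_norm_sq_to_K]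
  ring

theorem Orthonormal.inner_map_map_of_mem_span {e : ι → E} (he : Orthonormal 𝕜 e) (T : E →ₗ[𝕜] F)
    (hT : Pairwise fun k l => inner 𝕜 (T (e k)) (T (e l)) = 0) {x y : E}
    (hx : x ∈ Submodule.span 𝕜 (Set.range e)) (hy : y ∈ Submodule.span 𝕜 (Set.range e)) :
    inner 𝕜 (T x) (T y) =
      ∑ k, conj (inner 𝕜 (e k) x) * (‖T (e k)‖ : 𝕜) ^ 2 * inner 𝕜 (e k) y := by
  conv_lhs => rw [← he.sum_inner_smul_eq_of_mem_span hx, ← he.sum_inner_smul_eq_of_mem_span hy]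
  simp_rw [map_sum, map_smul]
  exact inner_sum_smul_sum_smul_of_pairwise_inner_eq_zero hT _ _

end

theorem sq_cos_grassmann_principal_coordinate_expansion_general {p r : ℕ} (V W : Submodule 𝕜 X)
    (e : Fin p → X) (he : Orthonormal 𝕜 e) (heV : Submodule.span 𝕜 (Set.range e) = V)
    (hproj : ∀ i j : Fin p, i ≠ j →
      (inner 𝕜 ((W.orthogonalProjectionOnto (e i) : X)) ((W.orthogonalProjectionOnto (e j) : X)) : 𝕜) = 0)
    (U : Submodule 𝕜 X) (hUV : U ≤ V)
    (u : Fin r → X) (huU : Submodule.span 𝕜 (Set.range u) = U) :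
    (Matrix.of fun i j : Fin r =>
        (inner 𝕜 ((W.orthogonalProjectionOnto (u i) : X)) ((W.orthogonalProjectionOnto (u j) : X)) : 𝕜)).det =
      ((∑ S ∈ (Finset.powersetCard r (Finset.univ : Finset (Fin p))).attach,
          ‖(Matrix.of fun k j : Fin r =>
              (inner 𝕜 (e ((S.1.orderIsoOfFin (Finset.mem_powersetCard_univ.mp S.2) k : Fin p)))
                (u j) : 𝕜)).det‖ ^ 2 *
            ∏ k ∈ S.1, ‖(W.orthogonalProjectionOnto (e k) : X)‖ ^ 2 : ℝ) : 𝕜) := by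
  let P : X →ₗ[𝕜] X := W.subtype ∘ₗ W.orthogonalProjectionOnto.toLinearMap
  let A : Matrix (Fin p) (Fin r) 𝕜 := Matrix.of fun k j => inner 𝕜 (e k) (u j)
  have hu_mem : ∀ j, u j ∈ Submodule.span 𝕜 (Set.range e) := fun j =>
    heV ▸ hUV (huU ▸ Submodule.subset_span ⟨j, rfl⟩)
  have hgram : (Matrix.of fun i j => inner 𝕜 (P (u i)) (P (u j))) =
      Aᴴ * Matrix.diagonal (fun k => (‖P (e k)‖ : 𝕜) ^ 2) * A := by
    ext i j
    rw [Matrix.of_apply, he.inner_map_map_of_mem_span P hproj (hu_mem i) (hu_mem j),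
      Matrix.mul_apply]
    simp only [Matrix.mul_diagonal, Matrix.conjTranspose_apply, Matrix.of_apply, RCLike.star_def, A]
  change (Matrix.of fun i j => inner 𝕜 (P (u i)) (P (u j))).det = _
  rw [hgram, Matrix.det_conjTranspose_mul_diagonal_mul, RCLike.ofReal_sum]
  refine sum_congr rfl fun S _ => ?_
  rw [← starRingEnd_apply, RCLike.conj_mul]
  push_cast
  rfl

/-- Let `V, W` be nonzero subspaces, `P` the orthogonal projection onto `W`,
and `e : Fin p → X` an orthonormal basis of `V` whose projections onto `W` are pairwise
orthogonal (i.e. a principal basis of `V` w.r.t. `W`).  For an orthonormal family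
`u : Fin r → X` spanning `U ⊆ V`:
`det (⟪P (u i), P (u j)⟫) = ∑_{S ⊆ Fin p, |S| = r} |det (⟪e k, u j⟫)_{k ∈ S, j}|² * ∏_{k ∈ S} ‖P (e k)‖²`,
i.e. `cos² Θ_{U,W} = ∑_S cos² Θ_{U,V_S} * cos² Θ_{V_S,W}` over the coordinate `r`-subspaces
`V_S` of the principal basis. -/
theorem sq_cos_grassmann_principal_coordinate_expansion {p r : ℕ} (V W : Submodule 𝕜 X)
    (hV : V ≠ ⊥) (hW : W ≠ ⊥)
    (e : Fin p → X) (he : Orthonormal 𝕜 e) (heV : Submodule.span 𝕜 (Set.range e) = V)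
    (hproj : ∀ i j : Fin p, i ≠ j →
      (inner 𝕜 ((W.orthogonalProjectionOnto (e i) : X)) ((W.orthogonalProjectionOnto (e j) : X)) : 𝕜) = 0)
    (U : Submodule 𝕜 X) (hUV : U ≤ V)
    (u : Fin r → X) (hu : Orthonormal 𝕜 u) (huU : Submodule.span 𝕜 (Set.range u) = U) :
    (Matrix.of fun i j : Fin r =>
        (inner 𝕜 ((W.orthogonalProjectionOnto (u i) : X)) ((W.orthogonalProjectionOnto (u j) : X)) : 𝕜)).det =
      ((∑ S ∈ (Finset.powersetCard r (Finset.univ : Finset (Fin p))).attach,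
          ‖(Matrix.of fun k j : Fin r =>
              (inner 𝕜 (e ((S.1.orderIsoOfFin (Finset.mem_powersetCard_univ.mp S.2) k : Fin p)))
                (u j) : 𝕜)).det‖ ^ 2 *
            ∏ k ∈ S.1, ‖(W.orthogonalProjectionOnto (e k) : X)‖ ^ 2 : ℝ) : 𝕜) :=
  sq_cos_grassmann_principal_coordinate_expansion_general V W e he heV hproj U hUV u huU
end
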